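/- arXiv:2503.12839 — 3 statements merged into one kernel-verified Lean document; each statement's English description precedes it below -/
import Mathlib

section
/- Splitting lemma for DSER elementary transformations: for R-linear maps α₁, α₂ : Q → P, the DSER elementary orthogonal transformation satisfies E_{α₁+α₂} = E_{α₁/2} ∘ E_{α₂} ∘ E_{α₁/2}. -/
/-- The DSER elementary orthogonal transformation E_α on Q ⊥ H(P),
where αs plays the role of α* = d⁻¹ ∘ αᵗ : P* → Q. -/
def Edser {R Q P : Type*} [CommRing R] [AddCommGroup Q] [Module R Q]
    [AddCommGroup P] [Module R P] [Invertible (2 : R)]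
    (α : Q →ₗ[R] P) (αs : Module.Dual R P →ₗ[R] Q) :
    Q × P × Module.Dual R P → Q × P × Module.Dual R P :=
  fun m => (m.1 - αs m.2.2, m.2.1 + α m.1 - (⅟(2 : R)) • α (αs m.2.2), m.2.2)

theorem dser_splitting {R Q P : Type*} [CommRing R] [AddCommGroup Q] [Module R Q]
    [AddCommGroup P] [Module R P] [Invertible (2 : R)]
    (B : Q →ₗ[R] Q →ₗ[R] R)
    (hsymm : ∀ x y, B x y = B y x)
    (hnd : ∀ x, (∀ y, B x y = 0) → x = 0)
    (α₁ α₂ : Q →ₗ[R] P) (αs₁ αs₂ : Module.Dual R P →ₗ[R] Q)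
    (h₁ : ∀ f z, B (αs₁ f) z = f (α₁ z))
    (h₂ : ∀ f z, B (αs₂ f) z = f (α₂ z)) :
    Edser (α₁ + α₂) (αs₁ + αs₂) =
      Edser ((⅟(2 : R)) • α₁) ((⅟(2 : R)) • αs₁) ∘ Edser α₂ αs₂ ∘
        Edser ((⅟(2 : R)) • α₁) ((⅟(2 : R)) • αs₁) := by
  funext m
  simp only [Edser, Function.comp_apply, LinearMap.add_apply, LinearMap.smul_apply,
    map_add, map_sub, map_smul, smul_sub, smul_add, smul_smul]
  refine Prod.ext ?_ (Prod.ext ?_ rfl) <;> dsimp <;> match_scalars <;>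
    first
      | ring1
      | linear_combination mul_invOf_self (2:R)
      | linear_combination (-1 : R) * mul_invOf_self (2:R)
      | linear_combination ((⅟2*⅟2+⅟2 : R)) * mul_invOf_self (2:R)
end

section
/- The DSER elementary transformation E_α preserves the bilinear form on M = Q ⊥ H(P): for all m₁, m₂ ∈ M, ⟨E_α(m₁), E_α(m₂)⟩ = ⟨m₁, m₂⟩. -/
/-- The bilinear form on M = Q ⊥ H(P): ⟨(z₁,x₁,f₁),(z₂,x₂,f₂)⟩ = ⟨z₁,z₂⟩ + f₂(x₁) + f₁(x₂). -/
def hypForm {R Q P : Type*} [CommRing R] [AddCommGroup Q] [Module R Q]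
    [AddCommGroup P] [Module R P] (B : Q →ₗ[R] Q →ₗ[R] R)
    (m₁ m₂ : Q × P × Module.Dual R P) : R :=
  B m₁.1 m₂.1 + m₂.2.2 m₁.2.1 + m₁.2.2 m₂.2.1

theorem dser_Ealpha_isometry {R Q P : Type*} [CommRing R] [AddCommGroup Q] [Module R Q]
    [AddCommGroup P] [Module R P] [Invertible (2 : R)]
    (B : Q →ₗ[R] Q →ₗ[R] R)
    (hsymm : ∀ x y, B x y = B y x)
    (hnd : ∀ x, (∀ y, B x y = 0) → x = 0)
    (α : Q →ₗ[R] P) (αs : Module.Dual R P →ₗ[R] Q)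
    (hαs : ∀ f z, B (αs f) z = f (α z)) :
    ∀ m₁ m₂, hypForm B (Edser α αs m₁) (Edser α αs m₂) = hypForm B m₁ m₂ := by
  rintro ⟨z₁, x₁, f₁⟩ ⟨z₂, x₂, f₂⟩
  simp only [hypForm, Edser, map_sub, map_add, map_smul, LinearMap.sub_apply,
    LinearMap.add_apply, LinearMap.smul_apply, smul_eq_mul]
  have h1 : B (αs f₁) z₂ = f₁ (α z₂) := hαs f₁ z₂
  have h2 : B z₁ (αs f₂) = f₂ (α z₁) := (hsymm _ _).trans (hαs f₂ z₁)
  have h3 : B (αs f₁) (αs f₂) = f₁ (α (αs f₂)) := hαs f₁ (αs f₂)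
  have h4 : f₂ (α (αs f₁)) = f₁ (α (αs f₂)) := by
    rw [← hαs f₂ (αs f₁), hsymm, hαs]
  have h5 : ⅟(2:R) * f₁ (α (αs f₂)) + ⅟(2:R) * f₁ (α (αs f₂)) = f₁ (α (αs f₂)) := by
    rw [← add_mul, ← two_mul, mul_invOf_self, one_mul]
  rw [h1, h2, h3, h4]
  linear_combination -h5
end

section
/- The elementary orthogonal matrices satisfy the commutator relation oe_{i,j}(ab) = [oe_{i,k}(a), oe_{k,j}(b)] when i, j, k, σ(i), σ(j), σ(k) are pairwise distinct. -/
/-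
Write `oe i j z = 1 + N` with `N = z·e_{i,j} − z·e_{σ(j),σ(i)}`. For `X = N_{i,k}(a)` and
`Y = N_{k,j}(b)` the disjointness of the index pairs gives `X² = Y² = XYX = YXY = 0`, so
`(1 + X)⁻¹ = 1 − X` and the commutator collapses to `1 + XY − YX`. Finally `XY = ab·e_{i,j}` and
`YX = ab·e_{σ(j),σ(i)}`, so `XY − YX = N_{i,j}(ab)`.
-/

open Matrix

variable {R : Type*} [CommRing R] {r : ℕ}

/-- The involution σ on {1,…,2r} (0-based: pairs (2i, 2i+1) are swapped),
i.e. σ(2i) = 2i−1 and σ(2i−1) = 2i in the paper's 1-based indexing. -/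
def sig (k : Fin (2*r)) : Fin (2*r) :=
  ⟨if k.1 % 2 = 0 then k.1 + 1 else k.1 - 1, by have := k.isLt; split <;> omega⟩

/-- The elementary orthogonal generator oe_{i,j}(z) = I + z·e_{i,j} − z·e_{σ(j),σ(i)}. -/
def oe (i j : Fin (2*r)) (z : R) : Matrix (Fin (2*r)) (Fin (2*r)) R :=
  1 + single i j z - single (sig j) (sig i) z

lemma sig_involutive : Function.Involutive (sig (r := r)) := by
  intro k
  have := k.isLt
  ext
  simp only [sig]
  split <;> split <;> omega

lemma sig_injective : Function.Injective (sig (r := r)) :=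
  sig_involutive.injective

lemma sig_ne_self (k : Fin (2*r)) : sig k ≠ k := by
  have := k.isLt
  simp only [sig, Fin.ne_iff_vne]
  split <;> omega

lemma ne_sig_comm {a b : Fin (2*r)} : a ≠ sig b ↔ b ≠ sig a :=
  not_congr (sig_involutive.eq_iff.symm.trans eq_comm)

lemma one_add_mul_one_sub_of_mul_self_eq_zero {A : Type*} [Ring A] {x : A} (hx : x * x = 0) :
    (1 + x) * (1 - x) = 1 := by
  rw [add_mul, one_mul, mul_sub, mul_one, hx]
  abel

lemma commutator_one_add_of_nilpotent {A : Type*} [Ring A] {x y : A}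
    (hx : x * x = 0) (hy : y * y = 0) (hxyx : x * y * x = 0) (hyxy : y * x * y = 0) :
    (1 + x) * (1 + y) * (1 - x) * (1 - y) = 1 + (x * y - y * x) := by
  have expand : (1 + x) * (1 + y) * (1 - x) * (1 - y) = 1 + (x * y - y * x) - x * x - y * y
      + x * x * y + y * x * y - x * y * x - x * (y * y) + x * y * x * y := by
    noncomm_ring
  rw [expand, hx, hy, hxyx, hyxy]
  simp

def oeNil (i j : Fin (2*r)) (z : R) : Matrix (Fin (2*r)) (Fin (2*r)) R :=
  single i j z - single (sig j) (sig i) z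

lemma oe_eq_one_add_oeNil (i j : Fin (2*r)) (z : R) : oe i j z = 1 + oeNil i j z :=
  add_sub_assoc _ _ _

lemma oeNil_mul_self {i j : Fin (2*r)} (hij : i ≠ j) (z : R) : oeNil i j z * oeNil i j z = 0 := by
  have hsig : sig i ≠ sig j := sig_injective.ne hij
  simp [oeNil, sub_mul, mul_sub, hij.symm, (sig_ne_self j).symm, sig_ne_self i, hsig]

lemma oe_inv {i j : Fin (2*r)} (hij : i ≠ j) (z : R) : (oe i j z)⁻¹ = 1 - oeNil i j z := by
  rw [oe_eq_one_add_oeNil]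
  exact inv_eq_right_inv (one_add_mul_one_sub_of_mul_self_eq_zero (oeNil_mul_self hij z))

lemma oeNil_mul_oeNil {i j k : Fin (2*r)} (hij : i ≠ j) (hkis : k ≠ sig i) (hkjs : k ≠ sig j)
    (a b : R) : oeNil i k a * oeNil k j b = single i j (a * b) := by
  have hsig : sig i ≠ sig j := sig_injective.ne hij
  simp [oeNil, sub_mul, mul_sub, hkjs, hkis.symm, hsig]

lemma oeNil_swap (i j : Fin (2*r)) (z : R) : oeNil (sig j) (sig i) z = -oeNil i j z := by
  simp [oeNil, sig_involutive _]

lemma oeNil_mul_oeNil_rev {i j k : Fin (2*r)} (hij : i ≠ j) (hiks : i ≠ sig k) (hjks : j ≠ sig k)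
    (a b : R) : oeNil k j b * oeNil i k a = single (sig j) (sig i) (b * a) :=
  calc oeNil k j b * oeNil i k a = oeNil (sig j) (sig k) b * oeNil (sig k) (sig i) a := by
        rw [oeNil_swap, oeNil_swap, neg_mul_neg]
    _ = single (sig j) (sig i) (b * a) :=
        oeNil_mul_oeNil (sig_injective.ne hij.symm) (sig_injective.ne (ne_sig_comm.mp hjks))
          (sig_injective.ne (ne_sig_comm.mp hiks)) b a

lemma single_mul_oeNil_eq_zero {p l i j : Fin (2*r)} (hli : l ≠ i) (hljs : l ≠ sig j) (c z : R) :
    single p l c * oeNil i j z = 0 := by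
  simp [oeNil, mul_sub, hli, hljs]

theorem oe_commutator_general (i j k : Fin (2*r)) (a b : R)
    (hij : i ≠ j)
    (hik : i ≠ k) (hiks : i ≠ sig k)
    (hjk : j ≠ k) (hjks : j ≠ sig k) :
    oe i j (a * b) = oe i k a * oe k j b * (oe i k a)⁻¹ * (oe k j b)⁻¹ := by
  have hkis : k ≠ sig i := ne_sig_comm.mp hiks
  have hkjs : k ≠ sig j := ne_sig_comm.mp hjks
  have hxy := oeNil_mul_oeNil hij hkis hkjs a b
  have hyx := oeNil_mul_oeNil_rev hij hiks hjks a b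
  have hxyx : oeNil i k a * oeNil k j b * oeNil i k a = 0 := by
    rw [hxy]
    exact single_mul_oeNil_eq_zero hij.symm hjks _ _
  have hyxy : oeNil k j b * oeNil i k a * oeNil k j b = 0 := by
    rw [hyx]
    exact single_mul_oeNil_eq_zero hkis.symm (sig_injective.ne hij) _ _
  rw [oe_inv hik, oe_inv hjk.symm]
  simp only [oe_eq_one_add_oeNil]
  rw [commutator_one_add_of_nilpotent (oeNil_mul_self hik a) (oeNil_mul_self hjk.symm b) hxyx hyxy,
    hxy, hyx, mul_comm b a]
  rfl

theorem oe_commutator (i j k : Fin (2*r)) (a b : R)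
    (hij : i ≠ j) (hijs : i ≠ sig j)
    (hik : i ≠ k) (hiks : i ≠ sig k)
    (hjk : j ≠ k) (hjks : j ≠ sig k) :
    oe i j (a * b) = oe i k a * oe k j b * (oe i k a)⁻¹ * (oe k j b)⁻¹ :=
  oe_commutator_general i j k a b hij hik hiks hjk hjks
end
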